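/- Let X be an HLUR Banach space. Then for every x ∈ S_X, the faces S(X,x*,0) and S(X,y*,0) coincide for all x*, y* ∈ J(x), where J(x) = {y* ∈ S_{X*} : y*(x) = 1}. -/

import Mathlib

open Metric Filter Topology NormedSpace

noncomputable section

/-- The face `S(X, f, 0) = {y ∈ B_X : f(y) = 1}` determined by a functional `f`. -/
def face (X : Type*) [NormedAddCommGroup X] [NormedSpace ℝ X] (f : X →L[ℝ] ℝ) : Set X :=
  {y | ‖y‖ ≤ 1 ∧ f y = 1}

/-- Property (HS). -/
def HSProp (X : Type*) [NormedAddCommGroup X] [NormedSpace ℝ X] : Prop :=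
  ∀ f : X →L[ℝ] ℝ, ‖f‖ = 1 → (face X f).Nonempty →
    ∀ xs : ℕ → X, (∀ n, ‖xs n‖ ≤ 1) →
      Tendsto (fun n => f (xs n)) atTop (𝓝 1) →
      Tendsto (fun n => infDist (xs n) (face X f)) atTop (𝓝 0)

/-- Property (HLUR). -/
def HLUR (X : Type*) [NormedAddCommGroup X] [NormedSpace ℝ X] : Prop :=
  ∀ x : X, ‖x‖ = 1 → ∀ xs : ℕ → X, (∀ n, ‖xs n‖ = 1) →
    Tendsto (fun n => ‖xs n + x‖) atTop (𝓝 2) →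
    ∀ f : X →L[ℝ] ℝ, ‖f‖ = 1 → f x = 1 →
      Tendsto (fun n => infDist (xs n) (face X f)) atTop (𝓝 0)

/-- Local uniform rotundity. -/
def LUR (X : Type*) [NormedAddCommGroup X] [NormedSpace ℝ X] : Prop :=
  ∀ x : X, ‖x‖ = 1 → ∀ xs : ℕ → X, (∀ n, ‖xs n‖ = 1) →
    Tendsto (fun n => ‖xs n + x‖) atTop (𝓝 2) → Tendsto xs atTop (𝓝 x)

/-- Compact local uniform rotundity. -/
def CLUR (X : Type*) [NormedAddCommGroup X] [NormedSpace ℝ X] : Prop :=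
  ∀ x : X, ‖x‖ = 1 → ∀ xs : ℕ → X, (∀ n, ‖xs n‖ = 1) →
    Tendsto (fun n => ‖xs n + x‖) atTop (𝓝 2) →
    ∃ φ : ℕ → ℕ, StrictMono φ ∧ ∃ z : X, Tendsto (xs ∘ φ) atTop (𝓝 z)

/-- Local U-convexity. -/
def LocallyUConvex (X : Type*) [NormedAddCommGroup X] [NormedSpace ℝ X] : Prop :=
  ∀ x : X, ‖x‖ = 1 → ∀ xs : ℕ → X, (∀ n, ‖xs n‖ = 1) →
    Tendsto (fun n => ‖xs n + x‖) atTop (𝓝 2) →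
    ∃ f : X →L[ℝ] ℝ, ‖f‖ = 1 ∧ f x = 1 ∧ Tendsto (fun n => f (xs n)) atTop (𝓝 1)

/-- Strong local U-convexity. -/
def StronglyLocallyUConvex (X : Type*) [NormedAddCommGroup X] [NormedSpace ℝ X] : Prop :=
  ∀ x : X, ‖x‖ = 1 → ∀ xs : ℕ → X, (∀ n, ‖xs n‖ = 1) →
    Tendsto (fun n => ‖xs n + x‖) atTop (𝓝 2) →
    ∀ f : X →L[ℝ] ℝ, ‖f‖ = 1 → f x = 1 → Tendsto (fun n => f (xs n)) atTop (𝓝 1)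

/-- Rotundity (strict convexity): every face has at most one element. -/
def Rotund (X : Type*) [NormedAddCommGroup X] [NormedSpace ℝ X] : Prop :=
  ∀ f : X →L[ℝ] ℝ, ‖f‖ = 1 → (face X f).Subsingleton

/-- Near strict convexity: every face is norm-compact. -/
def NSC (X : Type*) [NormedAddCommGroup X] [NormedSpace ℝ X] : Prop :=
  ∀ f : X →L[ℝ] ℝ, ‖f‖ = 1 → IsCompact (face X f)

/-- Kadets-Klee property. -/
def KadetsKlee (X : Type*) [NormedAddCommGroup X] [NormedSpace ℝ X] : Prop :=
  ∀ (xs : ℕ → X) (x : X),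
    (∀ f : X →L[ℝ] ℝ, Tendsto (fun n => f (xs n)) atTop (𝓝 (f x))) →
    Tendsto (fun n => ‖xs n‖) atTop (𝓝 ‖x‖) → Tendsto xs atTop (𝓝 x)

/-- Alternatively convex or smooth. -/
def ACS (X : Type*) [NormedAddCommGroup X] [NormedSpace ℝ X] : Prop :=
  ∀ x y : X, ‖x‖ = 1 → ‖y‖ = 1 → ∀ f : X →L[ℝ] ℝ, ‖f‖ = 1 →
    ‖x + y‖ = 2 → f x = 1 → f y = 1

/-- Smoothness: each unit vector has a unique norming functional. -/
def SmoothSpace (X : Type*) [NormedAddCommGroup X] [NormedSpace ℝ X] : Prop :=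
  ∀ x : X, ‖x‖ = 1 → ∃! f : X →L[ℝ] ℝ, ‖f‖ = 1 ∧ f x = 1

/-- Reflexivity of a normed space. -/
def ReflexiveSpace (X : Type*) [NormedAddCommGroup X] [NormedSpace ℝ X] : Prop :=
  Function.Surjective (inclusionInDoubleDual ℝ X)

/-- Strong rotundity: reflexive, rotund and Kadets-Klee. -/
def StronglyRotund (X : Type*) [NormedAddCommGroup X] [NormedSpace ℝ X] : Prop :=
  ReflexiveSpace X ∧ Rotund X ∧ KadetsKlee X

/-! A point `y` of the face `S(X, f, 0)` satisfies `‖y + x‖ = 2`, so HLUR applied to the constant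
sequence `y` gives `d(y, S(X, g, 0)) = 0`; the face of `g` is closed, hence contains `y`. -/

theorem isClosed_face (X : Type*) [NormedAddCommGroup X] [NormedSpace ℝ X] (f : X →L[ℝ] ℝ) :
    IsClosed (face X f) :=
  (isClosed_le continuous_norm continuous_const).inter (isClosed_eq f.continuous continuous_const)

section

variable {X : Type*} [NormedAddCommGroup X] [NormedSpace ℝ X] {f : X →L[ℝ] ℝ}

theorem one_le_norm_of_map_eq_one (hf : ‖f‖ ≤ 1) {y : X} (hy : f y = 1) : 1 ≤ ‖y‖ :=
  calc (1 : ℝ) = f y := hy.symm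
    _ ≤ ‖f‖ * ‖y‖ := (le_abs_self _).trans (f.le_opNorm y)
    _ ≤ ‖y‖ := mul_le_of_le_one_left (norm_nonneg y) hf

theorem norm_eq_one_of_mem_face (hf : ‖f‖ ≤ 1) {y : X} (hy : y ∈ face X f) : ‖y‖ = 1 :=
  le_antisymm hy.1 (one_le_norm_of_map_eq_one hf hy.2)

theorem norm_add_eq_two_of_mem_face (hf : ‖f‖ ≤ 1) {x y : X} (hx : x ∈ face X f)
    (hy : y ∈ face X f) : ‖x + y‖ = 2 := by
  refine le_antisymm ?_ ?_
  · calc ‖x + y‖ ≤ ‖x‖ + ‖y‖ := norm_add_le x y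
      _ ≤ 2 := by linarith [hx.1, hy.1]
  · have hxy : f ((1 / 2 : ℝ) • (x + y)) = 1 := by
      rw [map_smul, map_add, hx.2, hy.2, smul_eq_mul]; norm_num
    have := one_le_norm_of_map_eq_one hf hxy
    rw [norm_smul, Real.norm_of_nonneg (by norm_num)] at this
    linarith

theorem HLUR.face_subset_face (hX : HLUR X) {x : X} (hx : ‖x‖ = 1) {g : X →L[ℝ] ℝ}
    (hf : ‖f‖ = 1) (hfx : f x = 1) (hg : ‖g‖ = 1) (hgx : g x = 1) : face X f ⊆ face X g := by
  intro y hy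
  have hxf : x ∈ face X f := ⟨hx.le, hfx⟩
  have hyx : ‖y + x‖ = 2 := norm_add_eq_two_of_mem_face hf.le hy hxf
  have hdist : Tendsto (fun _ : ℕ => infDist y (face X g)) atTop (𝓝 0) :=
    hX x hx (fun _ => y) (fun _ => norm_eq_one_of_mem_face hf.le hy)
      (by simpa only [hyx] using tendsto_const_nhds) g hg hgx
  exact ((isClosed_face X g).mem_iff_infDist_zero ⟨x, hx.le, hgx⟩).mpr
    (tendsto_nhds_unique tendsto_const_nhds hdist)

end

theorem hlur_faces_coincide_general (X : Type*) [NormedAddCommGroup X] [NormedSpace ℝ X]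
    (hX : HLUR X) :
    ∀ x : X, ‖x‖ = 1 → ∀ f g : X →L[ℝ] ℝ, ‖f‖ = 1 → f x = 1 → ‖g‖ = 1 → g x = 1 →
      face X f = face X g :=
  fun _ hx _ _ hf hfx hg hgx =>
    (hX.face_subset_face hx hf hfx hg hgx).antisymm (hX.face_subset_face hx hg hgx hf hfx)

theorem hlur_faces_coincide (X : Type*) [NormedAddCommGroup X] [NormedSpace ℝ X]
    [CompleteSpace X] (hX : HLUR X) :
    ∀ x : X, ‖x‖ = 1 → ∀ f g : X →L[ℝ] ℝ, ‖f‖ = 1 → f x = 1 → ‖g‖ = 1 → g x = 1 →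
      face X f = face X g :=
  hlur_faces_coincide_general X hX
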